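/- arXiv:2103.00674 — 2 statements merged into one kernel-verified Lean document; each statement's English description precedes it below -/
import Mathlib

section
/- With N = 2^m cells of positive probabilities p_1, ..., p_N summing to 1, let μ be the vector of expectations of the N-1 nontrivial binary interactions and Σ_μ their second moment matrix (i.e., the submatrices of H p and H diag(p) H obtained by removing the row/column of the constant interaction). Then (1/N^2) ∑_{k=1}^N p_k^{-1} = (1 - μ^T Σ_μ^{-1} μ)^{-1}. -/
/-!
The full moment matrix `M = H diag(p) H` has first row and column `(1, μ)` and lower-right
block `Σ_μ`. Since `H² = N • 1`, its inverse is `N⁻² H diag(p⁻¹) H`, whose corner entry is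
`N⁻² ∑ₖ pₖ⁻¹ > 0`. Eliminating that pivot in `M⁻¹` yields `Σ_μ⁻¹`, and then
`μᵀ Σ_μ⁻¹ μ = M₀₀ - (M⁻¹)₀₀⁻¹` with `M₀₀ = ∑ₖ pₖ = 1`.
-/

open Matrix Finset

/-- The Sylvester–Hadamard matrix of order `2^m`, indexed by sign patterns; the constant
interaction corresponds to the index `fun _ => false` (first row/column, all ones). -/
def sylvesterHadamard (m : ℕ) : Matrix (Fin m → Bool) (Fin m → Bool) ℝ :=
  fun S k => ∏ i : Fin m, if S i ∧ k i then (-1 : ℝ) else 1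

section SylvesterHadamard

variable {m : ℕ}

theorem sylvesterHadamard_transpose : (sylvesterHadamard m)ᵀ = sylvesterHadamard m := by
  ext S k
  simp only [transpose_apply, sylvesterHadamard]
  exact prod_congr rfl fun i _ => if_congr and_comm rfl rfl

theorem sylvesterHadamard_apply_false (S : Fin m → Bool) :
    sylvesterHadamard m S (fun _ => false) = 1 := by
  simp [sylvesterHadamard]

theorem sylvesterHadamard_mul_self :
    sylvesterHadamard m * sylvesterHadamard m = (2 ^ m : ℝ) • 1 := by
  have hfactor (a b : Bool) : ∑ x : Bool,
      (if a ∧ x then (-1 : ℝ) else 1) * (if x ∧ b then -1 else 1) = if a = b then 2 else 0 := by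
    cases a <;> cases b <;> norm_num [Fintype.sum_bool]
  ext S T
  calc (sylvesterHadamard m * sylvesterHadamard m) S T
      = ∑ k : Fin m → Bool, ∏ i, (if S i ∧ k i then (-1 : ℝ) else 1) *
          (if k i ∧ T i then -1 else 1) := by
        simp only [mul_apply, sylvesterHadamard, ← prod_mul_distrib]
    _ = ∏ i, ∑ x : Bool, (if S i ∧ x then (-1 : ℝ) else 1) * (if x ∧ T i then -1 else 1) :=
        (Fintype.prod_sum fun i (x : Bool) =>
          (if S i ∧ x then (-1 : ℝ) else 1) * (if x ∧ T i then -1 else 1)).symm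
    _ = ∏ i, if S i = T i then (2 : ℝ) else 0 := by simp only [hfactor]
    _ = ((2 ^ m : ℝ) • (1 : Matrix (Fin m → Bool) (Fin m → Bool) ℝ)) S T := by
        simp [prod_ite_zero, one_apply, funext_iff]

theorem sylvesterHadamard_mulVec_apply_false (d : (Fin m → Bool) → ℝ) :
    (sylvesterHadamard m *ᵥ d) (fun _ => false) = ∑ k, d k := by
  simp [mulVec, dotProduct, sylvesterHadamard]

theorem sylvesterHadamard_mul_diagonal_mul_apply_false (d : (Fin m → Bool) → ℝ)
    (S : Fin m → Bool) :
    (sylvesterHadamard m * diagonal d * sylvesterHadamard m) S (fun _ => false) =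
      (sylvesterHadamard m *ᵥ d) S := by
  rw [mul_apply]
  simp only [mul_diagonal, sylvesterHadamard_apply_false, mul_one]
  rfl

theorem sylvesterHadamard_mul_diagonal_mul_transpose (d : (Fin m → Bool) → ℝ) :
    (sylvesterHadamard m * diagonal d * sylvesterHadamard m)ᵀ =
      sylvesterHadamard m * diagonal d * sylvesterHadamard m := by
  rw [transpose_mul, transpose_mul, diagonal_transpose, sylvesterHadamard_transpose,
    Matrix.mul_assoc]

theorem sylvesterHadamard_mul_diagonal_mul_false_apply (d : (Fin m → Bool) → ℝ)
    (T : Fin m → Bool) :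
    (sylvesterHadamard m * diagonal d * sylvesterHadamard m) (fun _ => false) T =
      (sylvesterHadamard m *ᵥ d) T := by
  rw [← sylvesterHadamard_mul_diagonal_mul_transpose, transpose_apply,
    sylvesterHadamard_mul_diagonal_mul_apply_false]

theorem sylvesterHadamard_mul_diagonal_mul_mul_diagonal_inv {d : (Fin m → Bool) → ℝ}
    (hd : ∀ k, d k ≠ 0) :
    sylvesterHadamard m * diagonal d * sylvesterHadamard m *
        (((2 ^ m : ℝ) ^ 2)⁻¹ • (sylvesterHadamard m * diagonal d⁻¹ * sylvesterHadamard m)) = 1 := by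
  have hdiag : diagonal d * diagonal d⁻¹ = 1 := by
    rw [diagonal_mul_diagonal, ← diagonal_one]
    exact congrArg diagonal (funext fun k => mul_inv_cancel₀ (hd k))
  set H := sylvesterHadamard m
  have hconj : H * diagonal d * H * (H * diagonal d⁻¹ * H) = (2 ^ m : ℝ) ^ 2 • 1 := by
    calc _ = H * diagonal d * (H * H) * diagonal d⁻¹ * H := by simp only [Matrix.mul_assoc]
      _ = (2 ^ m : ℝ) • (H * (diagonal d * diagonal d⁻¹) * H) := by
        simp only [H, sylvesterHadamard_mul_self, Matrix.mul_smul, Matrix.smul_mul,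
          Matrix.mul_one, Matrix.mul_assoc]
      _ = (2 ^ m : ℝ) ^ 2 • 1 := by
        rw [hdiag, Matrix.mul_one, sylvesterHadamard_mul_self, smul_smul, sq]
  rw [Matrix.mul_smul, hconj, smul_smul, inv_mul_cancel₀ (by positivity), one_smul]

end SylvesterHadamard

theorem Fintype.sum_subtype_ne_of_eq_zero {ι M : Type*} [Fintype ι] [DecidableEq ι]
    [AddCommMonoid M] {f : ι → M} {i₀ : ι} (h : f i₀ = 0) :
    ∑ j : {i // i ≠ i₀}, f j = ∑ i, f i := by
  rw [Fintype.sum_eq_add_sum_subtype_ne f i₀, h, zero_add]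

namespace Matrix

variable {K ι : Type*} [Field K]

/-- Off row and column `i₀`, the Schur complement of the pivot `A i₀ i₀` in `A`. -/
def eliminatePivot (A : Matrix ι ι K) (i₀ : ι) : Matrix ι ι K :=
  A - (A i₀ i₀)⁻¹ • vecMulVec (A.col i₀) (A.row i₀)

theorem eliminatePivot_apply_right {A : Matrix ι ι K} {i₀ : ι} (ha : A i₀ i₀ ≠ 0) (i : ι) :
    A.eliminatePivot i₀ i i₀ = 0 := by
  simp only [eliminatePivot, sub_apply, smul_apply, vecMulVec_apply, col_apply, row_apply,
    smul_eq_mul]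
  rw [mul_comm (A i i₀), inv_mul_cancel_left₀ ha, sub_self]

theorem eliminatePivot_apply_left {A : Matrix ι ι K} {i₀ : ι} (ha : A i₀ i₀ ≠ 0) (j : ι) :
    A.eliminatePivot i₀ i₀ j = 0 := by
  simp [eliminatePivot, vecMulVec_apply, ha]

variable [Fintype ι] [DecidableEq ι]

theorem mul_eliminatePivot_inv {M : Matrix ι ι K} (hM : IsUnit M.det) (i₀ : ι) :
    M * M⁻¹.eliminatePivot i₀ = 1 - (M⁻¹ i₀ i₀)⁻¹ • vecMulVec (Pi.single i₀ 1) (M⁻¹.row i₀) := by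
  rw [eliminatePivot, Matrix.mul_sub, Matrix.mul_smul, mul_vecMulVec, ← mulVec_single_one,
    mulVec_mulVec, mul_nonsing_inv M hM, one_mulVec]

theorem inv_submatrix_ne {M : Matrix ι ι K} (hM : IsUnit M.det) {i₀ : ι} (ha : M⁻¹ i₀ i₀ ≠ 0) :
    (M.submatrix (Subtype.val : {i // i ≠ i₀} → ι) (Subtype.val : {i // i ≠ i₀} → ι))⁻¹ =
      (M⁻¹.eliminatePivot i₀).submatrix Subtype.val Subtype.val := by
  refine inv_eq_right_inv ?_
  ext S T
  rw [mul_apply]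
  simp only [submatrix_apply]
  rw [Fintype.sum_subtype_ne_of_eq_zero (f := fun U => M S U * M⁻¹.eliminatePivot i₀ U T)
    (by rw [eliminatePivot_apply_left ha, mul_zero]), ← mul_apply, mul_eliminatePivot_inv hM]
  simp [vecMulVec_apply, S.2, one_apply, Subtype.ext_iff]

theorem row_dotProduct_inv_submatrix_mulVec_col {M : Matrix ι ι K} (hM : IsUnit M.det) {i₀ : ι}
    (ha : M⁻¹ i₀ i₀ ≠ 0) :
    (fun j : {i // i ≠ i₀} => M i₀ j) ⬝ᵥ
        (M.submatrix (Subtype.val : {i // i ≠ i₀} → ι) (Subtype.val : {i // i ≠ i₀} → ι))⁻¹ *ᵥ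
          (fun j => M j i₀) =
      M i₀ i₀ - (M⁻¹ i₀ i₀)⁻¹ := by
  rw [inv_submatrix_ne hM ha]
  set X := M⁻¹.eliminatePivot i₀
  have hMXM : M * X * M = M - (M⁻¹ i₀ i₀)⁻¹ • vecMulVec (Pi.single i₀ 1) (Pi.single i₀ 1) := by
    rw [mul_eliminatePivot_inv hM, Matrix.sub_mul, Matrix.smul_mul, vecMulVec_mul,
      ← single_one_vecMul, vecMul_vecMul, nonsing_inv_mul M hM, vecMul_one, Matrix.one_mul]
  have hXMcol (S : {i // i ≠ i₀}) :
      ∑ T : {i // i ≠ i₀}, X S T * M T i₀ = (X *ᵥ M.col i₀) S :=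
    Fintype.sum_subtype_ne_of_eq_zero (f := fun T => X S T * M T i₀)
      (mul_eq_zero_of_left (eliminatePivot_apply_right ha _) _)
  calc _ = ∑ S : {i // i ≠ i₀}, M i₀ S * (X *ᵥ M.col i₀) S :=
        Finset.sum_congr rfl fun S _ => congrArg (M i₀ S * ·) (hXMcol S)
    _ = M.row i₀ ⬝ᵥ X *ᵥ M.col i₀ :=
        Fintype.sum_subtype_ne_of_eq_zero (f := fun S => M i₀ S * (X *ᵥ M.col i₀) S)
          (by simp [mulVec, dotProduct, X, eliminatePivot_apply_left ha])
    _ = Pi.single i₀ 1 ⬝ᵥ (M * X * M) *ᵥ Pi.single i₀ 1 := by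
        rw [← single_one_vecMul, ← mulVec_single_one]
        simp only [dotProduct_mulVec, vecMul_vecMul, Matrix.mul_assoc]
    _ = M i₀ i₀ - (M⁻¹ i₀ i₀)⁻¹ := by
        simp [hMXM, vecMulVec_apply]

end Matrix

/-- Harmonic mean / Hotelling identity: with `N = 2^m` cells of positive probabilities
summing to 1, `μ` the mean vector of the `N-1` nontrivial interactions and `Σ_μ` their
second moment matrix, `(1/N²) ∑_k p_k⁻¹ = (1 - μ^T Σ_μ⁻¹ μ)⁻¹`. -/
theorem harmonic_mean_hotelling (m : ℕ)
    (p : (Fin m → Bool) → ℝ) (hpos : ∀ k, 0 < p k) (hsum : ∑ k, p k = 1)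
    (μ : {S : Fin m → Bool // S ≠ fun _ => false} → ℝ)
    (hμ : ∀ S, μ S = ((sylvesterHadamard m).mulVec p) S.1)
    (Sig : Matrix {S : Fin m → Bool // S ≠ fun _ => false}
      {S : Fin m → Bool // S ≠ fun _ => false} ℝ)
    (hSig : ∀ S T, Sig S T =
      (sylvesterHadamard m * Matrix.diagonal p * sylvesterHadamard m) S.1 T.1) :
    (1 / ((2 : ℝ) ^ m) ^ 2) * ∑ k, (p k)⁻¹ = (1 - μ ⬝ᵥ Sig⁻¹.mulVec μ)⁻¹ := by
  obtain rfl : μ = fun S => (sylvesterHadamard m *ᵥ p) S.1 := funext hμ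
  obtain rfl : Sig = (sylvesterHadamard m * diagonal p * sylvesterHadamard m).submatrix
      Subtype.val Subtype.val := Matrix.ext hSig
  have hM := sylvesterHadamard_mul_diagonal_mul_mul_diagonal_inv fun k => (hpos k).ne'
  have hMinv : (sylvesterHadamard m * diagonal p * sylvesterHadamard m)⁻¹ (fun _ => false)
      (fun _ => false) = 1 / ((2 : ℝ) ^ m) ^ 2 * ∑ k, (p k)⁻¹ := by
    rw [inv_eq_right_inv hM, Matrix.smul_apply, sylvesterHadamard_mul_diagonal_mul_apply_false,
      sylvesterHadamard_mulVec_apply_false, smul_eq_mul, one_div]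
    rfl
  have hsum_inv : 0 < ∑ k, (p k)⁻¹ := sum_pos (fun k _ => inv_pos.2 (hpos k)) univ_nonempty
  have hquad := row_dotProduct_inv_submatrix_mulVec_col (isUnit_det_of_right_inverse hM)
    (i₀ := fun _ => false) (by rw [hMinv]; positivity)
  simp only [sylvesterHadamard_mul_diagonal_mul_false_apply,
    sylvesterHadamard_mul_diagonal_mul_apply_false, sylvesterHadamard_mulVec_apply_false, hsum,
    hMinv] at hquad
  rw [hquad, sub_sub_cancel, inv_inv]
end

section
/- Let U be a random vector in [-1,1]^p with depth-D binary approximations U_D (each coordinate U^j_D = ∑_{d=1}^D A^j_d/2^d with A^j_d ∈ {-1,1} and |U^j - U^j_D| ≤ 2^{-D}). Then for every t ∈ R^p, the characteristic function satisfies φ_U(t) = lim_{D→∞} ∑_{Λ ∈ B^{p×D}} Ψ_Λ(t) E[A_Λ], where the sum is over all p×D binary 0-1 matrices Λ, A_Λ = ∏_{j,d} (A^j_d)^{Λ_{jd}}, and Ψ_Λ(t) = ∏_{j=1}^p ∏_{d=1}^D cos(t_j/2^d)^{1-Λ_{jd}} (i sin(t_j/2^d))^{Λ_{jd}}. -/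
/-!
Since `A = ±1`, each factor `exp (i x A)` equals `cos x + i A sin x`, which is affine in `A`.
Multiplying these factors out over all pairs `(j, d)` turns `exp (i t·U_D)` pointwise into
`∑_Λ Ψ_Λ(t) A_Λ`; taking expectations gives the depth-`D` sum, and since `U_D → U` pointwise
and `|exp (i ·)| = 1`, dominated convergence lets `D → ∞`.
-/

open MeasureTheory Filter Finset

open Complex

lemma Fintype.sum_prod_ite_mem {ι R : Type*} [Fintype ι] [DecidableEq ι] [CommSemiring R]
    (f g : ι → R) :
    ∑ S : Finset ι, ∏ i, (if i ∈ S then f i else g i) = ∏ i, (f i + g i) := by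
  rw [Fintype.prod_add]
  refine Finset.sum_congr rfl fun S _ => ?_
  rw [prod_ite, filter_mem_eq_inter, univ_inter, filter_not, filter_mem_eq_inter, univ_inter,
    compl_eq_univ_sdiff]

lemma Fintype.sum_pi_prod_prod_ite_mem {ι κ R : Type*} [Fintype ι] [DecidableEq ι] [Fintype κ]
    [DecidableEq κ] [CommSemiring R] (f g : ι → κ → R) :
    ∑ Λ : ι → Finset κ, ∏ i, ∏ k, (if k ∈ Λ i then f i k else g i k) =
      ∏ i, ∏ k, (f i k + g i k) := by
  simp_rw [← Fintype.sum_prod_ite_mem, Fintype.prod_sum]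

lemma exp_I_mul_ofReal_mul_of_eq_neg_one_or_eq_one {x a : ℝ} (ha : a = -1 ∨ a = 1) :
    exp (I * ((x * a : ℝ) : ℂ)) = cos x + I * sin x * a := by
  rcases ha with rfl | rfl
  · rw [show I * ((x * -1 : ℝ) : ℂ) = (-x : ℂ) * I by push_cast; ring, exp_mul_I, cos_neg,
      sin_neg]
    push_cast; ring
  · rw [show I * ((x * 1 : ℝ) : ℂ) = (x : ℂ) * I by push_cast; ring, exp_mul_I]
    push_cast; ring

lemma exp_I_mul_ofReal_mul_binary_sum {a : ℕ → ℝ} (ha : ∀ d, a d = -1 ∨ a d = 1) (x : ℝ) (D : ℕ) :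
    exp (I * ((x * ∑ d ∈ range D, a d / 2 ^ (d + 1) : ℝ) : ℂ)) =
      ∏ d : Fin D, (cos ((x / 2 ^ ((d : ℕ) + 1) : ℝ) : ℂ) +
        I * sin ((x / 2 ^ ((d : ℕ) + 1) : ℝ) : ℂ) * a d) := by
  rw [mul_sum, ofReal_sum, mul_sum, exp_sum, ← Fin.prod_univ_eq_prod_range]
  refine prod_congr rfl fun d _ => ?_
  rw [← exp_I_mul_ofReal_mul_of_eq_neg_one_or_eq_one (ha d)]
  ring_nf

section

variable {ι : Type*} [Fintype ι]

/-- The paper's `Ψ_Λ(t)`, with the 0-1 matrix `Λ` encoded row by row as `Λ j = {d | Λ_{jd} = 1}`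
and the paper's depth index `d + 1` shifted to `d : Fin D`. -/
noncomputable def beautyPsi (t : ι → ℝ) {D : ℕ} (Λ : ι → Finset (Fin D)) : ℂ :=
  ∏ j, ∏ d : Fin D,
    if d ∈ Λ j then I * sin ((t j / 2 ^ ((d : ℕ) + 1) : ℝ) : ℂ)
    else cos ((t j / 2 ^ ((d : ℕ) + 1) : ℝ) : ℂ)

lemma beautyPsi_mul_prod (t : ι → ℝ) {D : ℕ} (Λ : ι → Finset (Fin D)) (a : ι → ℕ → ℝ) :
    beautyPsi t Λ * ((∏ j, ∏ d ∈ Λ j, a j d : ℝ) : ℂ) =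
      ∏ j, ∏ d : Fin D,
        if d ∈ Λ j then I * sin ((t j / 2 ^ ((d : ℕ) + 1) : ℝ) : ℂ) * a j d
        else cos ((t j / 2 ^ ((d : ℕ) + 1) : ℝ) : ℂ) := by
  simp only [beautyPsi, ofReal_prod, ← prod_mul_distrib]
  refine prod_congr rfl fun j _ => ?_
  rw [← Fintype.prod_ite_mem (Λ j) fun d => (a j d : ℂ), ← prod_mul_distrib]
  refine prod_congr rfl fun d _ => ?_
  split_ifs <;> ring

lemma sum_beautyPsi_mul_prod_eq_exp [DecidableEq ι] (t : ι → ℝ) {a : ι → ℕ → ℝ}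
    (ha : ∀ j d, a j d = -1 ∨ a j d = 1) (D : ℕ) :
    ∑ Λ : ι → Finset (Fin D), beautyPsi t Λ * ((∏ j, ∏ d ∈ Λ j, a j d : ℝ) : ℂ) =
      exp (I * ((∑ j, t j * ∑ d ∈ range D, a j d / 2 ^ (d + 1) : ℝ) : ℂ)) := by
  simp_rw [beautyPsi_mul_prod, Fintype.sum_pi_prod_prod_ite_mem]
  rw [ofReal_sum, mul_sum, exp_sum]
  refine prod_congr rfl fun j _ => ?_
  rw [exp_I_mul_ofReal_mul_binary_sum (ha j)]
  exact prod_congr rfl fun d _ => add_comm _ _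

lemma sum_beautyPsi_mul_integral_eq_integral_exp [DecidableEq ι] {Ω : Type*} [MeasurableSpace Ω]
    (μ : Measure Ω) [IsFiniteMeasure μ] (t : ι → ℝ) {A : ι → ℕ → Ω → ℝ}
    (hAm : ∀ j d, Measurable (A j d)) (hA : ∀ j d ω, A j d ω = -1 ∨ A j d ω = 1) (D : ℕ) :
    ∑ Λ : ι → Finset (Fin D), beautyPsi t Λ * ((∫ ω, ∏ j, ∏ d ∈ Λ j, A j d ω ∂μ : ℝ) : ℂ) =
      ∫ ω, exp (I * ((∑ j, t j * ∑ d ∈ range D, A j d ω / 2 ^ (d + 1) : ℝ) : ℂ)) ∂μ := by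
  have hint (Λ : ι → Finset (Fin D)) : Integrable (fun ω => ∏ j, ∏ d ∈ Λ j, A j d ω) μ := by
    refine Integrable.of_bound (by fun_prop) 1 (ae_of_all _ fun ω => le_of_eq ?_)
    simp only [norm_prod, Real.norm_eq_abs]
    exact prod_eq_one fun j _ => prod_eq_one fun d _ => by rcases hA j d ω with h | h <;> simp [h]
  calc ∑ Λ : ι → Finset (Fin D), beautyPsi t Λ * ((∫ ω, ∏ j, ∏ d ∈ Λ j, A j d ω ∂μ : ℝ) : ℂ)
      = ∑ Λ : ι → Finset (Fin D), ∫ ω, beautyPsi t Λ * ((∏ j, ∏ d ∈ Λ j, A j d ω : ℝ) : ℂ) ∂μ := by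
        refine Finset.sum_congr rfl fun Λ _ => ?_
        rw [integral_const_mul, integral_complex_ofReal]
    _ = ∫ ω, ∑ Λ : ι → Finset (Fin D), beautyPsi t Λ * ((∏ j, ∏ d ∈ Λ j, A j d ω : ℝ) : ℂ) ∂μ :=
        (integral_finsetSum _ fun Λ _ => (hint Λ).ofReal.const_mul _).symm
    _ = _ := integral_congr_ae <| ae_of_all _ fun ω =>
        sum_beautyPsi_mul_prod_eq_exp t (fun j d => hA j d ω) D

lemma tendsto_integral_exp_I_mul_of_tendsto {Ω α : Type*} [MeasurableSpace Ω] {μ : Measure Ω}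
    [IsFiniteMeasure μ] {l : Filter α} [l.IsCountablyGenerated] {F : α → Ω → ℝ} {G : Ω → ℝ}
    (hF : ∀ n, AEStronglyMeasurable (F n) μ)
    (hFG : ∀ᵐ ω ∂μ, Tendsto (fun n => F n ω) l (nhds (G ω))) :
    Tendsto (fun n => ∫ ω, exp (I * F n ω) ∂μ) l (nhds (∫ ω, exp (I * G ω) ∂μ)) := by
  have hcont : Continuous fun x : ℝ => exp (I * x) := by fun_prop
  refine tendsto_integral_filter_of_dominated_convergence (fun _ => 1)
    (Eventually.of_forall fun n => hcont.comp_aestronglyMeasurable (hF n))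
    (Eventually.of_forall fun _ => ae_of_all _ fun _ => (norm_exp_I_mul_ofReal _).le)
    (integrable_const 1) (hFG.mono fun _ h => (hcont.tendsto _).comp h)

end

theorem beauty_characteristic_function_general (p : ℕ)
    {Ω : Type*} [MeasurableSpace Ω] (P : Measure Ω) [IsProbabilityMeasure P]
    (U : Ω → (Fin p → ℝ))
    (A : Fin p → ℕ → Ω → ℝ) (hAm : ∀ j d, Measurable (A j d))
    (hAval : ∀ j d ω, A j d ω = -1 ∨ A j d ω = 1)
    (happrox : ∀ j ω (D : ℕ),
      |U ω j - ∑ d ∈ Finset.range D, A j d ω / 2 ^ (d + 1)| ≤ 2⁻¹ ^ D)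
    (t : Fin p → ℝ) :
    Tendsto
      (fun D : ℕ =>
        ∑ Λ : Fin p → Finset (Fin D),
          ((∏ j : Fin p, ∏ d : Fin D,
              if d ∈ Λ j then Complex.I * Complex.sin ((t j / 2 ^ ((d : ℕ) + 1) : ℝ) : ℂ)
              else Complex.cos ((t j / 2 ^ ((d : ℕ) + 1) : ℝ) : ℂ)) *
            ((∫ ω, ∏ j : Fin p, ∏ d ∈ Λ j, A j (d : ℕ) ω ∂P : ℝ) : ℂ)))
      atTop
      (nhds (∫ ω, Complex.exp (Complex.I * ((∑ j : Fin p, t j * U ω j : ℝ) : ℂ)) ∂P)) := by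
  have hbinary (ω : Ω) (j : Fin p) :
      Tendsto (fun D => ∑ d ∈ range D, A j d ω / 2 ^ (d + 1)) atTop (nhds (U ω j)) := by
    refine tendsto_iff_dist_tendsto_zero.2 (squeeze_zero (fun _ => dist_nonneg) (fun D => ?_)
      (tendsto_pow_atTop_nhds_zero_of_lt_one (by norm_num) (by norm_num : (2⁻¹ : ℝ) < 1)))
    rw [Real.dist_eq, abs_sub_comm]
    exact happrox j ω D
  refine (tendsto_integral_exp_I_mul_of_tendsto (fun D => ?_) (ae_of_all _ fun ω => ?_)).congr
    fun D => (sum_beautyPsi_mul_integral_eq_integral_exp P t hAm hAval D).symm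
  · fun_prop
  · exact tendsto_finsetSum _ fun j _ => (hbinary ω j).const_mul (t j)

/-- BEAUTY equation: for a random vector `U` in `[-1,1]^p` with depth-`D` binary
approximations (coordinatewise `|Uʲ - ∑_{d=1}^D Aʲ_d/2^d| ≤ 2^{-D}` with `Aʲ_d ∈ {-1,1}`),
the characteristic function satisfies, for every `t ∈ ℝ^p`,
`φ_U(t) = lim_{D→∞} ∑_{Λ ∈ B^{p×D}} Ψ_Λ(t) E[A_Λ]`, where `A_Λ = ∏_{j,d∈Λ_j} Aʲ_d` and
`Ψ_Λ(t) = ∏_{j,d} cos(t_j/2^d)^{1-Λ_{jd}} (i sin(t_j/2^d))^{Λ_{jd}}`. -/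
theorem beauty_characteristic_function (p : ℕ)
    {Ω : Type*} [MeasurableSpace Ω] (P : Measure Ω) [IsProbabilityMeasure P]
    (U : Ω → (Fin p → ℝ)) (hUm : Measurable U)
    (A : Fin p → ℕ → Ω → ℝ) (hAm : ∀ j d, Measurable (A j d))
    (hAval : ∀ j d ω, A j d ω = -1 ∨ A j d ω = 1)
    (happrox : ∀ j ω (D : ℕ),
      |U ω j - ∑ d ∈ Finset.range D, A j d ω / 2 ^ (d + 1)| ≤ 2⁻¹ ^ D)
    (t : Fin p → ℝ) :
    Tendsto
      (fun D : ℕ =>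
        ∑ Λ : Fin p → Finset (Fin D),
          ((∏ j : Fin p, ∏ d : Fin D,
              if d ∈ Λ j then Complex.I * Complex.sin ((t j / 2 ^ ((d : ℕ) + 1) : ℝ) : ℂ)
              else Complex.cos ((t j / 2 ^ ((d : ℕ) + 1) : ℝ) : ℂ)) *
            ((∫ ω, ∏ j : Fin p, ∏ d ∈ Λ j, A j (d : ℕ) ω ∂P : ℝ) : ℂ)))
      atTop
      (nhds (∫ ω, Complex.exp (Complex.I * ((∑ j : Fin p, t j * U ω j : ℝ) : ℂ)) ∂P)) :=
  beauty_characteristic_function_general p P U A hAm hAval happrox t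
end
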